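/- Assume (H_a) and (H_B). Let w^in ∈ Y_1^+ with M_1(w^in) ≤ ρ1, and for l ≥ 1 let w^l be a mass-conserving solution on [0,∞) of the truncated equation (with kernel a^l and initial condition w^{in,l}) belonging to L^∞_loc([0,∞); Y_m) for all m > 1. Then for every T ∈ (0,∞) and every i ≥ 1 there exists a constant Π_i(T), depending only on A, ρ1, i and T, such that for each l ≥ i, ∫_0^T |dw_i^l/dt (t)| dt ≤ Π_i(T). -/

import Mathlib

open MeasureTheory

/-- The moment of order `γ` of a sequence `y = (y_i)_{i ≥ 1}`. -/
noncomputable def mom (γ : ℝ) (y : ℕ → ℝ) : ℝ :=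
  ∑' n : ℕ, ((n + 1 : ℕ) : ℝ) ^ γ * y (n + 1)

/-- Membership in the space `Y_γ`. -/
def inY (γ : ℝ) (y : ℕ → ℝ) : Prop :=
  Summable fun n : ℕ => ((n + 1 : ℕ) : ℝ) ^ γ * |y (n + 1)|

/-- The gain term `(1/2) Σ_{j=i+1}^∞ Σ_{k=1}^{j-1} B_{j-k,k}^i a_{j-k,k} w_{j-k} w_k`. -/
noncomputable def gainT (a : ℕ → ℕ → ℝ) (B : ℕ → ℕ → ℕ → ℝ)
    (w : ℕ → ℝ → ℝ) (i : ℕ) (τ : ℝ) : ℝ :=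
  (1 / 2) * ∑' n : ℕ, ∑ k ∈ Finset.Ico 1 (i + 1 + n),
    B (i + 1 + n - k) k i * a (i + 1 + n - k) k * w (i + 1 + n - k) τ * w k τ

/-- The loss term `Σ_{j=1}^∞ a_{i,j} w_i w_j`. -/
noncomputable def lossT (a : ℕ → ℕ → ℝ) (w : ℕ → ℝ → ℝ) (i : ℕ) (τ : ℝ) : ℝ :=
  ∑' n : ℕ, a i (n + 1) * w i τ * w (n + 1) τ

/-- A solution on `[0,∞)` of the discrete collision-induced breakage equation with
kernel `a`, daughter distribution `B` and initial condition `win`. -/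
def IsSol (a : ℕ → ℕ → ℝ) (B : ℕ → ℕ → ℕ → ℝ) (win : ℕ → ℝ)
    (w : ℕ → ℝ → ℝ) : Prop :=
  (∀ i, 1 ≤ i → ∀ t : ℝ, 0 ≤ t → 0 ≤ w i t) ∧
  (∀ i, 1 ≤ i → ContinuousOn (w i) (Set.Ici (0 : ℝ))) ∧
  (∀ i, 1 ≤ i → w i 0 = win i) ∧
  (∀ i, 1 ≤ i → ∀ t : ℝ, 0 < t →
    IntegrableOn (lossT a w i) (Set.Ioc 0 t) ∧
    IntegrableOn (gainT a B w i) (Set.Ioc 0 t) ∧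
    w i t = win i + ∫ τ in Set.Ioc (0 : ℝ) t, (gainT a B w i τ - lossT a w i τ))

/-- Mass conservation: `M_1(w(t)) = M_1(w^in)` for all `t ≥ 0`. -/
def MassConserving (win : ℕ → ℝ) (w : ℕ → ℝ → ℝ) : Prop :=
  ∀ t : ℝ, 0 ≤ t → inY 1 (fun i => w i t) ∧ mom 1 (fun i => w i t) = mom 1 win

/-- Hypothesis (H_B) on the daughter distribution function. -/
def HB (B : ℕ → ℕ → ℕ → ℝ) : Prop :=
  ∀ j k : ℕ, 1 ≤ j → 1 ≤ k →
    (∀ i, 0 ≤ B j k i) ∧ (∀ i, B j k i = B k j i) ∧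
    (∀ i, j + k ≤ i → B j k i = 0) ∧
    (∑ i ∈ Finset.Ico 1 (j + k), (i : ℝ) * B j k i = (j : ℝ) + (k : ℝ))

/-- Hypothesis (H_m): moment damping at every order `m > 1`. -/
def Hmom (B : ℕ → ℕ → ℕ → ℝ) : Prop :=
  ∀ m : ℝ, 1 < m → ∃ ε κ : ℝ, 0 < ε ∧ ε < 1 ∧ 1 ≤ κ ∧
    ∀ j k : ℕ, 1 ≤ j → 1 ≤ k →
      ∑ i ∈ Finset.Ico 1 (j + k), (i : ℝ) ^ m * B j k i ≤
        (1 - ε) * ((j : ℝ) ^ m + (k : ℝ) ^ m) +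
          κ * ((j : ℝ) * (k : ℝ) ^ (m - 1) + (j : ℝ) ^ (m - 1) * (k : ℝ))

/-- Hypothesis (H_2): at least two fragments in each collision. -/
def H2 (B : ℕ → ℕ → ℕ → ℝ) : Prop :=
  ∀ j k : ℕ, 1 ≤ j → 1 ≤ k → 2 ≤ ∑ i ∈ Finset.Ico 1 (j + k), B j k i

/-- The collision kernel `a_{i,j} = A (i^α j^β + i^β j^α)`. -/
noncomputable def kerA (A α β : ℝ) (i j : ℕ) : ℝ :=
  A * ((i : ℝ) ^ α * (j : ℝ) ^ β + (i : ℝ) ^ β * (j : ℝ) ^ α)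

/-- The truncated collision kernel
`a^l_{i,j} = A (min{i,l}^{α₊} i^{α-α₊} j^β + i^β min{j,l}^{α₊} j^{α-α₊})`. -/
noncomputable def kerTrunc (A α β : ℝ) (l : ℕ) (i j : ℕ) : ℝ :=
  A * (((min i l : ℕ) : ℝ) ^ max α 0 * (i : ℝ) ^ (α - max α 0) * (j : ℝ) ^ β +
       (i : ℝ) ^ β * ((min j l : ℕ) : ℝ) ^ max α 0 * (j : ℝ) ^ (α - max α 0))

/-- The truncated initial condition `w^{in,l}`. -/
def winTrunc (l : ℕ) (win : ℕ → ℝ) (i : ℕ) : ℝ := if i ≤ l then win i else 0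

/-- `w ∈ L^∞_loc([0,∞); Y_m)` for every `m > 1`. -/
def LocBddMoments (w : ℕ → ℝ → ℝ) : Prop :=
  ∀ m : ℝ, 1 < m → ∀ T : ℝ, 0 < T → ∃ C : ℝ,
    ∀ t ∈ Set.Icc (0 : ℝ) T, inY m (fun i => w i t) ∧ mom m (fun i => w i t) ≤ C

/-- `sup_{t ∈ [0,T]} M_γ(w(t)) < ∞` for each `T > 0`. -/
def BddMoment (γ : ℝ) (w : ℕ → ℝ → ℝ) : Prop :=
  ∀ T : ℝ, 0 < T → ∃ C : ℝ,
    ∀ t ∈ Set.Icc (0 : ℝ) T, inY γ (fun i => w i t) ∧ mom γ (fun i => w i t) ≤ C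

/-- A stationary solution of the discrete collision-induced breakage equation. -/
def IsStationaryCIB (a : ℕ → ℕ → ℝ) (B : ℕ → ℕ → ℕ → ℝ) (w : ℕ → ℝ) : Prop :=
  ∀ i, 1 ≤ i →
    Summable (fun n : ℕ => ∑ k ∈ Finset.Ico 1 (i + 1 + n),
      B (i + 1 + n - k) k i * a (i + 1 + n - k) k * w (i + 1 + n - k) * w k) ∧
    Summable (fun n : ℕ => a i (n + 1) * w i * w (n + 1)) ∧
    (1 / 2) * (∑' n : ℕ, ∑ k ∈ Finset.Ico 1 (i + 1 + n),
        B (i + 1 + n - k) k i * a (i + 1 + n - k) k * w (i + 1 + n - k) * w k) =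
      ∑' n : ℕ, a i (n + 1) * w i * w (n + 1)

/-!
Gain and loss terms are nonnegative, so `|g - ℓ| ≤ (g - ℓ) + 2ℓ`. By the integral equation the
integral of `g - ℓ` over `(0, T]` is `w_i(T) - w_i^{in,l} ≤ M_1(w(T)) ≤ ρ₁`, using mass
conservation. Since `a^l_{i,j} ≤ 2A i j`, the loss term is at most `2A (i w_i) M_1(w) ≤ 2A ρ₁²`.
-/

open Set

lemma rpow_mul_rpow_sub_le_self {α : ℝ} (hα : α ≤ 1) (l : ℕ) {k : ℕ} (hk : 1 ≤ k) :
    ((min k l : ℕ) : ℝ) ^ max α 0 * (k : ℝ) ^ (α - max α 0) ≤ k := by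
  have hk1 : (1 : ℝ) ≤ k := by exact_mod_cast hk
  calc ((min k l : ℕ) : ℝ) ^ max α 0 * (k : ℝ) ^ (α - max α 0)
      ≤ (k : ℝ) ^ max α 0 * (k : ℝ) ^ (α - max α 0) := by
        gcongr
        exact_mod_cast min_le_left k l
    _ = (k : ℝ) ^ α := by rw [← Real.rpow_add (by positivity), add_sub_cancel]
    _ ≤ k := Real.rpow_le_self_of_one_le hk1 hα

lemma kerTrunc_nonneg {A : ℝ} (hA : 0 ≤ A) (α β : ℝ) (l i j : ℕ) :
    0 ≤ kerTrunc A α β l i j := by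
  unfold kerTrunc
  positivity

lemma kerTrunc_le {A α β : ℝ} (hA : 0 ≤ A) (hαβ : α ≤ β) (hβ : β ≤ 1) (l : ℕ) {i j : ℕ}
    (hi : 1 ≤ i) (hj : 1 ≤ j) : kerTrunc A α β l i j ≤ 2 * A * i * j := by
  have hi' := rpow_mul_rpow_sub_le_self (hαβ.trans hβ) l hi
  have hj' := rpow_mul_rpow_sub_le_self (hαβ.trans hβ) l hj
  have hiβ := Real.rpow_le_self_of_one_le (by exact_mod_cast hi : (1 : ℝ) ≤ i) hβ
  have hjβ := Real.rpow_le_self_of_one_le (by exact_mod_cast hj : (1 : ℝ) ≤ j) hβ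
  unfold kerTrunc
  rw [mul_assoc ((i : ℝ) ^ β)]
  calc _ ≤ A * ((i : ℝ) * j + i * j) := by gcongr
    _ = 2 * A * i * j := by ring

lemma winTrunc_nonneg {y : ℕ → ℝ} (hy : ∀ k, 1 ≤ k → 0 ≤ y k) (l : ℕ) {k : ℕ} (hk : 1 ≤ k) :
    0 ≤ winTrunc l y k := by
  unfold winTrunc
  split_ifs
  exacts [hy k hk, le_rfl]

lemma winTrunc_le {y : ℕ → ℝ} (hy : ∀ k, 1 ≤ k → 0 ≤ y k) (l : ℕ) {k : ℕ} (hk : 1 ≤ k) :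
    winTrunc l y k ≤ y k := by
  unfold winTrunc
  split_ifs
  exacts [le_rfl, hy k hk]

lemma summable_of_inY {γ : ℝ} {y : ℕ → ℝ} (hy : ∀ k, 1 ≤ k → 0 ≤ y k) (h : inY γ y) :
    Summable fun n : ℕ => ((n + 1 : ℕ) : ℝ) ^ γ * y (n + 1) :=
  h.congr fun n => by rw [abs_of_nonneg (hy _ n.succ_pos)]

lemma mom_nonneg (γ : ℝ) {y : ℕ → ℝ} (hy : ∀ k, 1 ≤ k → 0 ≤ y k) : 0 ≤ mom γ y :=
  tsum_nonneg fun n => mul_nonneg (by positivity) (hy _ n.succ_pos)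

lemma mom_winTrunc_le {γ : ℝ} {y : ℕ → ℝ} (hy : ∀ k, 1 ≤ k → 0 ≤ y k) (h : inY γ y) (l : ℕ) :
    mom γ (winTrunc l y) ≤ mom γ y := by
  have hle : ∀ n : ℕ, ((n + 1 : ℕ) : ℝ) ^ γ * winTrunc l y (n + 1) ≤
      ((n + 1 : ℕ) : ℝ) ^ γ * y (n + 1) := fun n => by
    gcongr
    exact winTrunc_le hy l n.succ_pos
  have hs := summable_of_inY hy h
  exact (hs.of_nonneg_of_le (fun n => mul_nonneg (by positivity)
    (winTrunc_nonneg hy l n.succ_pos)) hle).tsum_le_tsum hle hs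

lemma mul_le_mom_one {y : ℕ → ℝ} (hy : ∀ k, 1 ≤ k → 0 ≤ y k) (h : inY 1 y) {k : ℕ}
    (hk : 1 ≤ k) : (k : ℝ) * y k ≤ mom 1 y := by
  obtain ⟨n, rfl⟩ : ∃ n, k = n + 1 := ⟨k - 1, by omega⟩
  have := (summable_of_inY hy h).le_tsum n fun m _ =>
    mul_nonneg (by positivity) (hy _ m.succ_pos)
  rwa [Real.rpow_one] at this

lemma le_mom_one {y : ℕ → ℝ} (hy : ∀ k, 1 ≤ k → 0 ≤ y k) (h : inY 1 y) {k : ℕ}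
    (hk : 1 ≤ k) : y k ≤ mom 1 y :=
  (le_mul_of_one_le_left (hy k hk) (by exact_mod_cast hk)).trans (mul_le_mom_one hy h hk)

lemma gainT_nonneg {a : ℕ → ℕ → ℝ} {B : ℕ → ℕ → ℕ → ℝ} {w : ℕ → ℝ → ℝ} {i : ℕ} {τ : ℝ}
    (ha : ∀ j k, 0 ≤ a j k) (hB : ∀ j k, 1 ≤ j → 1 ≤ k → 0 ≤ B j k i)
    (hw : ∀ k, 1 ≤ k → 0 ≤ w k τ) : 0 ≤ gainT a B w i τ := by
  refine mul_nonneg (by norm_num) (tsum_nonneg fun n => Finset.sum_nonneg fun k hk => ?_)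
  obtain ⟨hk1, hkn⟩ := Finset.mem_Ico.1 hk
  have hj : 1 ≤ i + 1 + n - k := by omega
  exact mul_nonneg (mul_nonneg (mul_nonneg (hB _ _ hj hk1) (ha _ _)) (hw _ hj)) (hw _ hk1)

lemma lossT_nonneg {a : ℕ → ℕ → ℝ} {w : ℕ → ℝ → ℝ} {i : ℕ} {τ : ℝ} (ha : ∀ j k, 0 ≤ a j k)
    (hw : ∀ k, 1 ≤ k → 0 ≤ w k τ) (hi : 1 ≤ i) : 0 ≤ lossT a w i τ :=
  tsum_nonneg fun n => mul_nonneg (mul_nonneg (ha _ _) (hw i hi)) (hw _ n.succ_pos)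

lemma lossT_le {a : ℕ → ℕ → ℝ} {K : ℝ} {w : ℕ → ℝ → ℝ} {i : ℕ} {τ : ℝ}
    (ha : ∀ j k, 0 ≤ a j k) (haK : ∀ j k, 1 ≤ j → 1 ≤ k → a j k ≤ K * j * k)
    (hw : ∀ k, 1 ≤ k → 0 ≤ w k τ) (hmass : inY 1 fun k => w k τ) (hi : 1 ≤ i) :
    lossT a w i τ ≤ K * mom 1 (fun k => w k τ) ^ 2 := by
  set M := mom 1 fun k => w k τ
  have hK : 0 ≤ K := by simpa using (ha 1 1).trans (haK 1 1 le_rfl le_rfl)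
  have hle : ∀ n : ℕ, a i (n + 1) * w i τ * w (n + 1) τ ≤
      K * M * (((n + 1 : ℕ) : ℝ) ^ (1 : ℝ) * w (n + 1) τ) := fun n => by
    have hwn := hw (n + 1) n.succ_pos
    rw [Real.rpow_one]
    calc a i (n + 1) * w i τ * w (n + 1) τ
        ≤ K * i * (n + 1 : ℕ) * w i τ * w (n + 1) τ := by
          gcongr
          exacts [hw i hi, haK i (n + 1) hi n.succ_pos]
      _ = K * (i * w i τ) * ((n + 1 : ℕ) * w (n + 1) τ) := by ring
      _ ≤ K * M * ((n + 1 : ℕ) * w (n + 1) τ) := by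
          gcongr
          exact mul_le_mom_one hw hmass hi
  have hs := (summable_of_inY hw hmass).mul_left (K * M)
  calc lossT a w i τ ≤ ∑' n : ℕ, K * M * (((n + 1 : ℕ) : ℝ) ^ (1 : ℝ) * w (n + 1) τ) :=
        (hs.of_nonneg_of_le (fun n => mul_nonneg (mul_nonneg (ha _ _) (hw i hi))
          (hw _ n.succ_pos)) hle).tsum_le_tsum hle hs
    _ = K * M ^ 2 := by rw [tsum_mul_left, sq, ← mul_assoc]; rfl

lemma abs_sub_le_sub_add_two_mul {x y : ℝ} (hx : 0 ≤ x) (hy : 0 ≤ y) :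
    |x - y| ≤ x - y + 2 * y := by
  rw [abs_le]
  constructor <;> linarith

lemma setIntegral_abs_sub_le {X : Type*} [MeasurableSpace X] {μ : Measure X} {s : Set X}
    (hs : MeasurableSet s) {f g : X → ℝ} (hf : IntegrableOn f s μ) (hg : IntegrableOn g s μ)
    (hf0 : ∀ x ∈ s, 0 ≤ f x) (hg0 : ∀ x ∈ s, 0 ≤ g x) :
    ∫ x in s, |f x - g x| ∂μ ≤ ∫ x in s, (f x - g x) ∂μ + 2 * ∫ x in s, g x ∂μ := by
  calc ∫ x in s, |f x - g x| ∂μ ≤ ∫ x in s, (f x - g x + 2 * g x) ∂μ :=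
        setIntegral_mono_on (hf.sub hg).abs ((hf.sub hg).add (hg.const_mul 2)) hs
          fun x hx => abs_sub_le_sub_add_two_mul (hf0 x hx) (hg0 x hx)
    _ = _ := by
      rw [integral_add (f := fun x => f x - g x) (hf.sub hg) (hg.const_mul 2), integral_const_mul]

lemma setIntegral_Ioc_le_of_le {f : ℝ → ℝ} {C T : ℝ} (hT : 0 ≤ T)
    (hf0 : ∀ x ∈ Ioc 0 T, 0 ≤ f x) (hfC : ∀ x ∈ Ioc 0 T, f x ≤ C) :
    ∫ x in Ioc 0 T, f x ≤ C * T := by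
  have := norm_setIntegral_le_of_norm_le_const (μ := volume) measure_Ioc_lt_top
    fun x hx => (Real.norm_of_nonneg (hf0 x hx)).trans_le (hfC x hx)
  rw [Real.volume_real_Ioc_of_le hT, sub_zero] at this
  exact (le_abs_self _).trans this

theorem stmt13_general (A α β : ℝ) (hA : 0 < A) (hαβ : α ≤ β) (hβ1 : β ≤ 1)
    (B : ℕ → ℕ → ℕ → ℝ) (hB : HB B)
    (win : ℕ → ℝ) (hpos : ∀ i, 1 ≤ i → 0 ≤ win i) (hY1 : inY 1 win)
    (ρ₁ : ℝ) (hM1 : mom 1 win ≤ ρ₁)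
    (W : ℕ → ℕ → ℝ → ℝ)
    (hW : ∀ l : ℕ, 1 ≤ l →
      IsSol (kerTrunc A α β l) B (winTrunc l win) (W l) ∧
      MassConserving (winTrunc l win) (W l) ∧ LocBddMoments (W l)) :
    ∀ T : ℝ, 0 < T → ∀ i : ℕ, 1 ≤ i → ∃ Cst : ℝ,
      ∀ l : ℕ, i ≤ l →
        (∫ t in Set.Ioc (0 : ℝ) T,
          |gainT (kerTrunc A α β l) B (W l) i t - lossT (kerTrunc A α β l) (W l) i t|) ≤
          Cst := by
  intro T hT i hi
  refine ⟨ρ₁ + 2 * (2 * A * ρ₁ ^ 2 * T), fun l hl => ?_⟩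
  obtain ⟨⟨hW0, -, -, hsol⟩, hmass, -⟩ := hW l (hi.trans hl)
  obtain ⟨hloss_int, hgain_int, hWiT⟩ := hsol i hi T hT
  have hw : ∀ t, 0 ≤ t → ∀ k, 1 ≤ k → 0 ≤ W l k t := fun t ht k hk => hW0 k hk t ht
  have ha := kerTrunc_nonneg hA.le α β l
  have hmass_le : ∀ t, 0 ≤ t → mom 1 (fun k => W l k t) ≤ ρ₁ := fun t ht =>
    (hmass t ht).2.trans_le ((mom_winTrunc_le hpos hY1 l).trans hM1)
  have hloss_le : ∀ τ ∈ Ioc 0 T, lossT (kerTrunc A α β l) (W l) i τ ≤ 2 * A * ρ₁ ^ 2 :=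
    fun τ hτ => calc
      _ ≤ 2 * A * mom 1 (fun k => W l k τ) ^ 2 :=
        lossT_le ha (fun _ _ hj hk => kerTrunc_le hA.le hαβ hβ1 l hj hk) (hw τ hτ.1.le)
          (hmass τ hτ.1.le).1 hi
      _ ≤ 2 * A * ρ₁ ^ 2 := by
        gcongr
        exacts [mom_nonneg 1 (hw τ hτ.1.le), hmass_le τ hτ.1.le]
  have hloss0 : ∀ τ ∈ Ioc 0 T, 0 ≤ lossT (kerTrunc A α β l) (W l) i τ :=
    fun τ hτ => lossT_nonneg ha (hw τ hτ.1.le) hi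
  calc _ ≤ _ := setIntegral_abs_sub_le measurableSet_Ioc hgain_int hloss_int
        (fun τ hτ => gainT_nonneg ha (fun j k hj hk => (hB j k hj hk).1 i) (hw τ hτ.1.le))
        hloss0
    _ = (W l i T - winTrunc l win i) +
        2 * ∫ τ in Ioc 0 T, lossT (kerTrunc A α β l) (W l) i τ := by rw [hWiT]; ring
    _ ≤ ρ₁ + 2 * (2 * A * ρ₁ ^ 2 * T) := by
      gcongr ?_ + 2 * ?_
      · have := le_mom_one (hw T hT.le) (hmass T hT.le).1 hi
        linarith [winTrunc_nonneg hpos l hi, hmass_le T hT.le]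
      · exact setIntegral_Ioc_le_of_le hT.le hloss0 hloss_le

/-- Lemma 3.8 ([Laurençot 2001, Lemma 3.4]): an `L¹` bound on the time derivative of
the truncated solutions, uniform in `l`. -/
theorem stmt13 (A α β : ℝ) (hA : 0 < A) (hαβ : α ≤ β) (hβ1 : β ≤ 1) (hβ0 : 0 < β) (hα1 : α < 1)
    (B : ℕ → ℕ → ℕ → ℝ) (hB : HB B)
    (win : ℕ → ℝ) (hpos : ∀ i, 1 ≤ i → 0 ≤ win i) (hY1 : inY 1 win)
    (ρ₁ : ℝ) (hM1 : mom 1 win ≤ ρ₁)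
    (W : ℕ → ℕ → ℝ → ℝ)
    (hW : ∀ l : ℕ, 1 ≤ l →
      IsSol (kerTrunc A α β l) B (winTrunc l win) (W l) ∧
      MassConserving (winTrunc l win) (W l) ∧ LocBddMoments (W l)) :
    ∀ T : ℝ, 0 < T → ∀ i : ℕ, 1 ≤ i → ∃ Cst : ℝ,
      ∀ l : ℕ, i ≤ l →
        (∫ t in Set.Ioc (0 : ℝ) T,
          |gainT (kerTrunc A α β l) B (W l) i t - lossT (kerTrunc A α β l) (W l) i t|) ≤
          Cst :=
  stmt13_general A α β hA hαβ hβ1 B hB win hpos hY1 ρ₁ hM1 W hW
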